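/- arXiv:1103.5895 — 2 statements merged into one kernel-verified Lean document; each statement's English description precedes it below -/
import Mathlib

section
/- The number of facets of the cyclic d-polytope with n vertices is f_{d-1}(C(n,d)) = C(n - floor((d+1)/2), n - d) + C(n - floor((d+2)/2), n - d). -/
/-!
A `d`-set `S ⊆ {0, …, n-1}` satisfies Gale's evenness condition iff, listing its complement as
`t₀ < ⋯ < t_{m-1}` (`m = n - d`), the numbers `t_k - k` of elements of `S` below `t_k` all have a
common parity `c`. For such complements, `t_k ↦ (t_k + k) / 2 = k + ⌊(t_k - k) / 2⌋` is a
bijection onto all `m`-subsets of `{0, …, ⌊(n + m - c) / 2⌋ - 1}`, with inverse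
`a_k ↦ 2 a_k + c - k`. The cases `c = 0` and `c = 1` give the two binomial coefficients.
-/

open Finset

namespace CyclicPolytope

section Rank

variable {α β : Type*} [LinearOrder α] [LinearOrder β]

def rank (s : Finset α) (a : α) : ℕ := #{x ∈ s | x < a}

lemma rank_add_card_filter_le_lt (s : Finset α) {a b : α} (hab : a ≤ b) :
    rank s a + #{x ∈ s | a ≤ x ∧ x < b} = rank s b := by
  rw [rank, rank, ← card_union_of_disjoint (disjoint_filter.2 fun x _ h h' => h'.1.not_gt h),
    ← filter_or]
  congr 1
  apply filter_congr
  intro x _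
  constructor
  · rintro (h | h)
    · exact h.trans_le hab
    · exact h.2
  · intro h
    exact (lt_or_ge x a).imp_right fun h' => ⟨h', h⟩

lemma rank_lt_rank {s : Finset α} {a b : α} (ha : a ∈ s) (hab : a < b) : rank s a < rank s b := by
  rw [← rank_add_card_filter_le_lt s hab.le, Nat.lt_add_right_iff_pos, card_pos]
  exact ⟨a, mem_filter.2 ⟨ha, le_rfl, hab⟩⟩

lemma rank_lt_card {s : Finset α} {a : α} (ha : a ∈ s) : rank s a < #s :=
  card_lt_card (filter_ssubset.2 ⟨a, ha, lt_irrefl a⟩)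

lemma rank_image_of_strictMonoOn {s : Finset α} {f : α → β} (hf : StrictMonoOn f s) {a : α}
    (ha : a ∈ s) : rank (s.image f) (f a) = rank s a := by
  have : {y ∈ s.image f | y < f a} = {x ∈ s | x < a}.image f := by
    ext y
    simp only [mem_filter, mem_image]
    constructor
    · rintro ⟨⟨x, hx, rfl⟩, hxa⟩
      exact ⟨x, ⟨hx, (hf.lt_iff_lt hx ha).1 hxa⟩, rfl⟩
    · rintro ⟨x, ⟨hx, hxa⟩, rfl⟩
      exact ⟨⟨x, hx, rfl⟩, hf hx ha hxa⟩
  rw [rank, this, card_image_of_injOn (hf.injOn.mono (filter_subset _ s)), rank]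

end Rank

lemma rank_le (s : Finset ℕ) (a : ℕ) : rank s a ≤ a :=
  (card_le_card fun _ hx => mem_range.2 (mem_filter.1 hx).2).trans (card_range a).le

lemma card_filter_le_lt_le (s : Finset ℕ) (a b : ℕ) : #{x ∈ s | a ≤ x ∧ x < b} ≤ b - a :=
  (card_le_card fun _ hx => mem_Ico.2 (mem_filter.1 hx).2).trans (Nat.card_Ico a b).le

lemma rank_le_rank_add_sub (s : Finset ℕ) {a b : ℕ} (hab : a ≤ b) :
    rank s b ≤ rank s a + (b - a) := by
  rw [← rank_add_card_filter_le_lt s hab]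
  exact Nat.add_le_add_left (card_filter_le_lt_le s a b) _

lemma card_sub_rank_le {s : Finset ℕ} {N a : ℕ} (hs : s ⊆ range N) (ha : a ∈ s) :
    #s - rank s a ≤ N - a := by
  have hN : rank s N = #s := by
    rw [rank, filter_true_of_mem fun x hx => mem_range.1 (hs hx)]
  have := rank_add_card_filter_le_lt s (mem_range.1 (hs ha)).le
  have := card_filter_le_lt_le s a N
  omega

section Compression

/-- `a - rank s a` counts the non-members of `s` below `a`; it has the parity of `a + rank s a`,
which avoids truncated subtraction. -/
def HasGapParity (c : ℕ) (s : Finset ℕ) : Prop := ∀ a ∈ s, (a + rank s a) % 2 = c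

instance (c : ℕ) : DecidablePred (HasGapParity c) :=
  fun s => inferInstanceAs (Decidable (∀ a ∈ s, (a + rank s a) % 2 = c))

lemma HasGapParity.eq {c c' : ℕ} {s : Finset ℕ} (hc : HasGapParity c s) (hc' : HasGapParity c' s)
    (hs : s.Nonempty) : c = c' := by
  obtain ⟨a, ha⟩ := hs
  rw [← hc a ha, hc' a ha]

def compress (s : Finset ℕ) : Finset ℕ := s.image fun a => (a + rank s a) / 2

def expand (c : ℕ) (s : Finset ℕ) : Finset ℕ := s.image fun a => 2 * a + c - rank s a

variable {c : ℕ} {s : Finset ℕ}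

lemma strictMonoOn_compress (hs : HasGapParity c s) :
    StrictMonoOn (fun a => (a + rank s a) / 2) s := by
  intro a ha b hb hab
  have := rank_lt_rank ha hab
  have := hs a ha
  have := hs b hb
  dsimp only
  omega

lemma strictMonoOn_expand (c : ℕ) (s : Finset ℕ) :
    StrictMonoOn (fun a => 2 * a + c - rank s a) s := by
  intro a _ b _ hab
  have := rank_le_rank_add_sub s hab.le
  have := rank_le s a
  dsimp only
  omega

lemma expand_compress (hs : HasGapParity c s) : expand c (compress s) = s := by
  rw [expand, compress, image_image]
  refine (image_congr fun a ha => ?_).trans image_id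
  have := rank_image_of_strictMonoOn (strictMonoOn_compress hs) ha
  have := hs a ha
  simp only [Function.comp_apply, id]
  omega

lemma compress_expand (hc : c ≤ 1) (s : Finset ℕ) : compress (expand c s) = s := by
  rw [expand, compress, image_image]
  refine (image_congr fun a ha => ?_).trans image_id
  have := rank_image_of_strictMonoOn (strictMonoOn_expand c s) ha
  have := rank_le s a
  simp only [Function.comp_apply, id]
  omega

lemma hasGapParity_expand (hc : c ≤ 1) (s : Finset ℕ) : HasGapParity c (expand c s) := by
  rw [HasGapParity, expand, forall_mem_image]
  intro a ha
  have := rank_image_of_strictMonoOn (strictMonoOn_expand c s) ha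
  have := rank_le s a
  omega

lemma card_compress (hs : HasGapParity c s) : #(compress s) = #s :=
  card_image_of_injOn (strictMonoOn_compress hs).injOn

lemma card_expand (c : ℕ) (s : Finset ℕ) : #(expand c s) = #s :=
  card_image_of_injOn (strictMonoOn_expand c s).injOn

lemma compress_subset_range {N : ℕ} (hs : HasGapParity c s) (hsN : s ⊆ range N) :
    compress s ⊆ range ((N + #s - c) / 2) := by
  intro y hy
  obtain ⟨a, ha, rfl⟩ := mem_image.1 hy
  have := card_sub_rank_le hsN ha
  have := rank_lt_card ha
  have := hs a ha
  rw [mem_range]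
  omega

lemma expand_subset_range {N : ℕ} (hsN : s ⊆ range ((N + #s - c) / 2)) :
    expand c s ⊆ range N := by
  intro y hy
  obtain ⟨a, ha, rfl⟩ := mem_image.1 hy
  have := card_sub_rank_le hsN ha
  have := rank_lt_card ha
  have := rank_le s a
  rw [mem_range]
  omega

theorem card_filter_hasGapParity (N m : ℕ) (hc : c ≤ 1) :
    #{s ∈ (range N).powersetCard m | HasGapParity c s} = ((N + m - c) / 2).choose m := by
  rw [← card_range ((N + m - c) / 2), ← card_powersetCard]
  refine card_nbij' compress (expand c) (fun s hs => ?_) (fun s hs => ?_)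
    (fun s hs => expand_compress (mem_filter.1 hs).2) (fun s _ => compress_expand hc s)
  · obtain ⟨hsN, hm⟩ := mem_powersetCard.1 (mem_filter.1 hs).1
    have hpar := (mem_filter.1 hs).2
    exact mem_powersetCard.2 ⟨hm ▸ compress_subset_range hpar hsN, (card_compress hpar).trans hm⟩
  · obtain ⟨hsK, hm⟩ := mem_powersetCard.1 hs
    exact mem_filter.2 ⟨mem_powersetCard.2 ⟨expand_subset_range (hm ▸ hsK),
      (card_expand c s).trans hm⟩, hasGapParity_expand hc s⟩

end Compression

section Gale

variable {n : ℕ}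

lemma even_card_compl_between_iff {t : Finset (Fin n)} {i j : Fin n} (hi : i ∈ t) (hij : i < j) :
    Even #{k ∈ tᶜ | i < k ∧ k < j} ↔ ((i : ℕ) + rank t i) % 2 = ((j : ℕ) + rank t j) % 2 := by
  have hcompl : {k ∈ tᶜ | i < k ∧ k < j} = {k ∈ Ico i j | k ∉ t} := by
    ext k
    simp only [mem_filter, mem_compl, mem_Ico]
    grind
  have hmem : {k ∈ t | i ≤ k ∧ k < j} = {k ∈ Ico i j | k ∈ t} := by
    ext k
    simp only [mem_filter, mem_Ico]
    tauto
  have hsplit := card_filter_add_card_filter_not (s := Ico i j) (· ∈ t)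
  have hrank := rank_add_card_filter_le_lt t hij.le
  rw [Fin.card_Ico, ← hmem] at hsplit
  have hij' : (i : ℕ) < j := hij
  rw [hcompl, Nat.even_iff]
  omega

lemma rank_map_valEmbedding (t : Finset (Fin n)) {i : Fin n} (hi : i ∈ t) :
    rank (t.map Fin.valEmbedding) i = rank t i := by
  rw [map_eq_image]
  exact rank_image_of_strictMonoOn (Fin.val_strictMono.strictMonoOn _) hi

lemma hasGapParity_map_valEmbedding_iff {c : ℕ} (t : Finset (Fin n)) :
    HasGapParity c (t.map Fin.valEmbedding) ↔ ∀ i ∈ t, ((i : ℕ) + rank t i) % 2 = c := by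
  rw [HasGapParity, forall_mem_map]
  exact forall₂_congr fun i hi => by rw [Fin.valEmbedding_apply, rank_map_valEmbedding t hi]

lemma gale_compl_iff {t : Finset (Fin n)} (ht : t.Nonempty) :
    (∀ i j : Fin n, i ∉ tᶜ → j ∉ tᶜ → i < j → Even #{k ∈ tᶜ | i < k ∧ k < j}) ↔
      HasGapParity 0 (t.map Fin.valEmbedding) ∨ HasGapParity 1 (t.map Fin.valEmbedding) := by
  simp only [hasGapParity_map_valEmbedding_iff, mem_compl, not_not]
  constructor
  · intro h
    obtain ⟨i₀, hi₀⟩ := ht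
    have hconst : ∀ i ∈ t, ((i : ℕ) + rank t i) % 2 = ((i₀ : ℕ) + rank t i₀) % 2 := by
      intro i hi
      rcases lt_trichotomy i i₀ with hlt | rfl | hgt
      · exact (even_card_compl_between_iff hi hlt).1 (h i i₀ hi hi₀ hlt)
      · rfl
      · exact ((even_card_compl_between_iff hi₀ hgt).1 (h i₀ i hi₀ hi hgt)).symm
    rcases Nat.mod_two_eq_zero_or_one ((i₀ : ℕ) + rank t i₀) with h0 | h1
    · exact Or.inl fun i hi => (hconst i hi).trans h0
    · exact Or.inr fun i hi => (hconst i hi).trans h1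
  · rintro (h | h) i j hi hj hij <;> rw [even_card_compl_between_iff hi hij, h i hi, h j hj]

end Gale

lemma card_filter_card_eq_eq_card_filter_compl {α : Type*} [Fintype α] [DecidableEq α] {d : ℕ}
    (hd : d ≤ Fintype.card α) (p : Finset α → Prop) [DecidablePred p] :
    #{s : Finset α | #s = d ∧ p s} = #{t ∈ univ.powersetCard (Fintype.card α - d) | p tᶜ} := by
  refine card_nbij' compl compl (fun s hs => ?_) (fun t ht => ?_)
    (fun s _ => compl_compl s) (fun t _ => compl_compl t)
  · obtain ⟨hcard, hp⟩ := (mem_filter.1 hs).2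
    simpa [card_compl, hcard] using hp
  · obtain ⟨-, hcard⟩ := mem_powersetCard.1 (mem_filter.1 ht).1
    simpa [card_compl, hcard, Nat.sub_sub_self hd] using (mem_filter.1 ht).2

lemma card_filter_powersetCard_univ_fin (n m : ℕ) (p : Finset ℕ → Prop) [DecidablePred p] :
    #{t ∈ (univ : Finset (Fin n)).powersetCard m | p (t.map Fin.valEmbedding)} =
      #{s ∈ (range n).powersetCard m | p s} := by
  rw [← Nat.Iio_eq_range, ← Fin.map_valEmbedding_univ, powersetCard_map, filter_map, card_map]
  rfl

end CyclicPolytope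

open Finset CyclicPolytope in
theorem cyclic_polytope_facet_count_general (d n : ℕ) (hn : d + 1 ≤ n) :
    Nat.card {S : Finset (Fin n) // S.card = d ∧
        ∀ i j : Fin n, i ∉ S → j ∉ S → i < j →
          Even ((S.filter (fun k => i < k ∧ k < j)).card)} =
      (n - (d + 1) / 2).choose (n - d) + (n - (d + 2) / 2).choose (n - d) := by
  have hm : 0 < n - d := by omega
  rw [Nat.card_eq_fintype_card, Fintype.card_subtype,
    card_filter_card_eq_eq_card_filter_compl (by simp; omega), Fintype.card_fin,
    filter_congr fun t ht => gale_compl_iff (card_pos.1 ((mem_powersetCard.1 ht).2 ▸ hm)),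
    card_filter_powersetCard_univ_fin n (n - d) (fun s => HasGapParity 0 s ∨ HasGapParity 1 s),
    filter_or, card_union_of_disjoint, card_filter_hasGapParity n _ zero_le_one,
    card_filter_hasGapParity n _ le_rfl]
  · congr 2 <;> omega
  · exact disjoint_filter.2 fun s hs h0 h1 =>
      zero_ne_one (h0.eq h1 (card_pos.1 ((mem_powersetCard.1 hs).2 ▸ hm)))

/-- The number of facets of the cyclic `d`-polytope with `n` vertices is
`C(n - ⌊(d+1)/2⌋, n - d) + C(n - ⌊(d+2)/2⌋, n - d)`.  By Gale's evenness
condition, the facets of `C(n, d)` correspond exactly to the `d`-element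
subsets `S` of the `n` (linearly ordered) vertices such that any two elements
outside `S` have an even number of elements of `S` between them. -/
theorem cyclic_polytope_facet_count (d n : ℕ) (hd : 2 ≤ d) (hn : d + 1 ≤ n) :
    Nat.card {S : Finset (Fin n) // S.card = d ∧
        ∀ i j : Fin n, i ∉ S → j ∉ S → i < j →
          Even ((S.filter (fun k => i < k ∧ k < j)).card)} =
      (n - (d + 1) / 2).choose (n - d) + (n - (d + 2) / 2).choose (n - d) :=
  cyclic_polytope_facet_count_general d n hn
end

section
/- Let (δ_0, ..., δ_d) be a symmetric sequence of nonnegative integers (δ_i = δ_{d-i} for all i) with δ_0 = 1, δ_1 = n - d - 1, and δ_i ≤ C(δ_1 + i - 1, i) for all i ≥ 1. Then δ_0 + δ_1 + ... + δ_d ≤ C(n - floor((d+1)/2), n-d) + C(n - floor((d+2)/2), n-d). -/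
/-!
Write `k = δ₁`, so that `n = k + d + 1` and the Macaulay bound reads `δᵢ ≤ multichoose k i`
(also for `i = 0`). Symmetry folds `δ₀ + ⋯ + δ_d` into two initial segments, of lengths
`⌊(d+2)/2⌋` and `⌊(d+1)/2⌋`, and by Pascal's rule an initial segment of length `r`
of the Macaulay bounds sums to at most `C(k + r, k + 1)`.
-/

open Finset

theorem Finset.sum_range_succ_eq_add_of_symm {M : Type*} [AddCommMonoid M] {d : ℕ} {f : ℕ → M}
    (hf : ∀ i ≤ d, f i = f (d - i)) :
    ∑ i ∈ range (d + 1), f i = ∑ i ∈ range ((d + 2) / 2), f i + ∑ i ∈ range ((d + 1) / 2), f i := by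
  conv_lhs => rw [show d + 1 = (d + 2) / 2 + (d + 1) / 2 by omega, sum_range_add]
  congr 1
  rw [← sum_range_reflect]
  refine sum_congr rfl fun j hj => ?_
  rw [mem_range] at hj
  rw [hf _ (by omega)]
  congr 1
  omega

theorem Nat.sum_range_multichoose_le (k r : ℕ) :
    ∑ i ∈ range r, k.multichoose i ≤ (k + r).choose (k + 1) := by
  induction r with
  | zero => simp
  | succ r ih =>
    have hlast : k.multichoose r ≤ (k + r).choose k := by
      rw [Nat.multichoose_eq, Nat.choose_symm_add]
      exact Nat.choose_le_choose r (by omega)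
    rw [sum_range_succ, ← add_assoc, Nat.choose_succ_succ', add_comm ((k + r).choose k)]
    exact add_le_add ih hlast

theorem Nat.sum_range_le_choose_of_le_multichoose {k : ℕ} {δ : ℕ → ℕ}
    (hδ : ∀ i, δ i ≤ k.multichoose i) (r : ℕ) :
    ∑ i ∈ range r, δ i ≤ (k + r).choose (k + 1) :=
  (sum_le_sum fun i _ => hδ i).trans (Nat.sum_range_multichoose_le k r)

/-- Let `(δ_0, ..., δ_d)` be a symmetric sequence of nonnegative integers
(`δ_i = δ_{d-i}`) with `δ_0 = 1`, `δ_1 = n - d - 1`, and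
`δ_i ≤ C(δ_1 + i - 1, i)` for all `i ≥ 1`.  Then
`δ_0 + ⋯ + δ_d ≤ C(n - ⌊(d+1)/2⌋, n - d) + C(n - ⌊(d+2)/2⌋, n - d)`. -/
theorem symmetric_delta_sum_bound (d n : ℕ) (δ : ℕ → ℕ)
    (hsym : ∀ i ≤ d, δ i = δ (d - i))
    (h0 : δ 0 = 1)
    (h1 : (δ 1 : ℤ) = (n : ℤ) - d - 1)
    (hub : ∀ i : ℕ, 1 ≤ i → δ i ≤ (δ 1 + i - 1).choose i) :
    ∑ i ∈ Finset.range (d + 1), δ i ≤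
      (n - (d + 1) / 2).choose (n - d) + (n - (d + 2) / 2).choose (n - d) := by
  have hmacaulay : ∀ i, δ i ≤ (δ 1).multichoose i := by
    rintro (_ | i)
    · simp [h0]
    · simpa [Nat.multichoose_eq] using hub (i + 1) (by omega)
  have hn₁ : n - (d + 1) / 2 = δ 1 + (d + 2) / 2 := by omega
  have hn₂ : n - (d + 2) / 2 = δ 1 + (d + 1) / 2 := by omega
  rw [Finset.sum_range_succ_eq_add_of_symm hsym, hn₁, hn₂, show n - d = δ 1 + 1 by omega]
  exact add_le_add (Nat.sum_range_le_choose_of_le_multichoose hmacaulay _)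
    (Nat.sum_range_le_choose_of_le_multichoose hmacaulay _)
end
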